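/- arXiv:math/0508537 — 5 statements merged into one kernel-verified Lean document; each statement's English description precedes it below -/
import Mathlib

section
/- Let C be an (m+n)×(m+n) complex matrix with 1 + C invertible, and let D be the n×n lower-right corner block of C(1+C)⁻¹. Then det(1 − D) = (∑_{X ⊆ {1,…,m}} det C[X, X]) / det(1 + C), where C[X, X] denotes the principal minor of C on rows and columns indexed by X (with the empty minor equal to 1). -/
open Matrix

/-!
Since `C (1 + C)⁻¹ = 1 - (1 + C)⁻¹`, the matrix `1 - D` is the lower-right block of
`(1 + C)⁻¹`. Jacobi's complementary minor identity gives
`det (1 + C) * det ((1 + C)⁻¹)₂₂ = det (1 + C)₁₁`, and `(1 + C)₁₁ = 1 + C₁₁`, whose determinant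
expands by multilinearity in the rows into the sum of the principal minors of `C₁₁`.
-/

theorem Matrix.det_one_add_eq_sum_det_submatrix {ι R : Type*} [Fintype ι] [DecidableEq ι]
    [CommRing R] (M : Matrix ι ι R) :
    (1 + M).det = ∑ s : Finset ι, (M.submatrix ((↑) : s → ι) (↑)).det := by
  calc (1 + M).det = detRowAlternating (M.row + (1 : Matrix ι ι R).row) := by rw [add_comm]; rfl
    _ = ∑ s : Finset ι, det (of (s.piecewise M.row (1 : Matrix ι ι R).row)) :=
      detRowAlternating.map_add_univ _ _
    _ = _ := Finset.sum_congr rfl fun s _ => det_piecewise_one_eq_submatrix_det M s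

theorem Matrix.det_mul_det_toBlocks₂₂_of_mul_eq_one {l m R : Type*} [Fintype l] [Fintype m]
    [DecidableEq l] [DecidableEq m] [CommRing R] {A B : Matrix (l ⊕ m) (l ⊕ m) R}
    (hAB : A * B = 1) :
    A.det * B.toBlocks₂₂.det = A.toBlocks₁₁.det := by
  obtain ⟨A₁₁, A₁₂, A₂₁, A₂₂, rfl⟩ : ∃ a b c d, fromBlocks a b c d = A :=
    ⟨_, _, _, _, fromBlocks_toBlocks A⟩
  obtain ⟨B₁₁, B₁₂, B₂₁, B₂₂, rfl⟩ : ∃ a b c d, fromBlocks a b c d = B :=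
    ⟨_, _, _, _, fromBlocks_toBlocks B⟩
  rw [fromBlocks_multiply, ← fromBlocks_one, fromBlocks_inj] at hAB
  obtain ⟨-, h₁₂, -, h₂₂⟩ := hAB
  have hprod :
      fromBlocks A₁₁ A₁₂ A₂₁ A₂₂ * fromBlocks 1 B₁₂ 0 B₂₂ = fromBlocks A₁₁ 0 A₂₁ 1 := by
    simp [fromBlocks_multiply, h₁₂, h₂₂]
  simpa [det_fromBlocks_zero₂₁, det_fromBlocks_zero₁₂] using congrArg det hprod

theorem Matrix.det_mul_det_submatrix_natAdd_of_mul_eq_one {m n : ℕ} {R : Type*} [CommRing R]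
    {A B : Matrix (Fin (m + n)) (Fin (m + n)) R} (hAB : A * B = 1) :
    A.det * (B.submatrix (Fin.natAdd m) (Fin.natAdd m)).det =
      (A.submatrix (Fin.castAdd n) (Fin.castAdd n)).det := by
  have hblock := det_mul_det_toBlocks₂₂_of_mul_eq_one
    (A := A.submatrix finSumFinEquiv finSumFinEquiv)
    (B := B.submatrix finSumFinEquiv finSumFinEquiv)
    (by rw [submatrix_mul_equiv, hAB, submatrix_one_equiv])
  rwa [det_submatrix_equiv_self] at hblock

theorem Matrix.one_sub_mul_inv_one_add {ι R : Type*} [Fintype ι] [DecidableEq ι] [CommRing R]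
    {C : Matrix ι ι R} (h : IsUnit (1 + C)) :
    1 - C * (1 + C)⁻¹ = (1 + C)⁻¹ := by
  have hinv : (1 + C) * (1 + C)⁻¹ = 1 := mul_nonsing_inv _ ((isUnit_iff_isUnit_det _).mp h)
  calc 1 - C * (1 + C)⁻¹ = (1 + C) * (1 + C)⁻¹ - C * (1 + C)⁻¹ := by rw [hinv]
    _ = (1 + C)⁻¹ := by rw [← sub_mul, add_sub_cancel_right, one_mul]

theorem widom_stmt3 {m n : ℕ} (C : Matrix (Fin (m + n)) (Fin (m + n)) ℂ)
    (h : IsUnit (1 + C))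
    (D : Matrix (Fin n) (Fin n) ℂ)
    (hD : D = (C * (1 + C)⁻¹).submatrix (Fin.natAdd m) (Fin.natAdd m)) :
    (1 - D).det =
      (∑ X : Finset (Fin m),
        (C.submatrix (fun i : {x // x ∈ X} => Fin.castAdd n i.1)
          (fun j : {x // x ∈ X} => Fin.castAdd n j.1)).det) / (1 + C).det := by
  have hdet : IsUnit (1 + C).det := (isUnit_iff_isUnit_det _).mp h
  have h1D : 1 - D = (1 - C * (1 + C)⁻¹).submatrix (Fin.natAdd m) (Fin.natAdd m) := by
    rw [submatrix_sub, Pi.sub_apply, Pi.sub_apply, submatrix_one _ (Fin.natAdd_injective n m), hD]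
  have hcorner : (1 + C).submatrix (Fin.castAdd n) (Fin.castAdd n) =
      1 + C.submatrix (Fin.castAdd n) (Fin.castAdd n) := by
    rw [submatrix_add, Pi.add_apply, Pi.add_apply, submatrix_one _ (Fin.castAdd_injective m n)]
  rw [h1D, one_sub_mul_inv_one_add h, eq_div_iff hdet.ne_zero, mul_comm,
    det_mul_det_submatrix_natAdd_of_mul_eq_one (mul_nonsing_inv _ hdet), hcorner,
    det_one_add_eq_sum_det_submatrix]
  rfl
end

section
/- Let C be an (m+n)×(m+n) complex matrix with 1 + C invertible, let D be the lower-right n×n corner of C(1+C)⁻¹ with det(1 − D) ≠ 0, and set E = D(1−D)⁻¹. Then det(1 + E) = det(1 + C) / (∑_{X ⊆ {1,…,m}} det C[X,X]). -/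
/-!
Put `A = 1 + C`. Since `C A⁻¹ = 1 - A⁻¹`, the matrix `1 - D` is the lower-right corner of `A⁻¹`,
and `1 + E = (1 - D)⁻¹`. Jacobi's complementary minor identity gives
`det A · det (1 - D) = det A₁₁`, where `A₁₁ = 1 + C₁₁` is the upper-left `m × m` corner of `A`,
and expanding `det (1 + C₁₁)` multilinearly in the rows gives the sum of the principal minors of
`C₁₁`.
-/

open Matrix

namespace Matrix

variable {R : Type*} [CommRing R]

section PrincipalMinors

variable {k : Type*} [Fintype k] [DecidableEq k]

theorem det_of_piecewise_one_eq_det_submatrix (N : Matrix k k R) (s : Finset k) :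
    (of (s.piecewise (fun i => N i) (fun i => (1 : Matrix k k R) i))).det =
      (N.submatrix ((↑) : s → k) ((↑) : s → k)).det := by
  let e : s ⊕ {x // x ∉ s} ≃ k := Equiv.sumCompl (· ∈ s)
  have hblocks : (of (s.piecewise (fun i => N i) (fun i => (1 : Matrix k k R) i))).submatrix e e =
      fromBlocks (N.submatrix ((↑) : s → k) ((↑) : s → k))
        (N.submatrix ((↑) : s → k) ((↑) : {x // x ∉ s} → k)) 0 1 := by
    ext (i | i) (j | j)
    · simp [e, i.2]
    · simp [e, i.2]
    · have hij : (i : k) ≠ j := fun hij => i.2 (hij ▸ j.2)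
      simp [e, i.2, hij]
    · simp [e, i.2, one_apply, Subtype.coe_injective.eq_iff]
  rw [← det_submatrix_equiv_self e, hblocks, det_fromBlocks_zero₂₁, det_one, mul_one]

theorem det_one_add_eq_sum_det_submatrix_s5 (N : Matrix k k R) :
    (1 + N).det = ∑ s : Finset k, (N.submatrix ((↑) : s → k) ((↑) : s → k)).det := by
  rw [add_comm]
  exact (detRowAlternating.toMultilinearMap.map_add_univ (fun i => N i)
    (fun i => (1 : Matrix k k R) i)).trans
    (Finset.sum_congr rfl fun s _ => det_of_piecewise_one_eq_det_submatrix N s)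

end PrincipalMinors

section Jacobi

variable {m n : Type*} [Fintype m] [Fintype n] [DecidableEq m] [DecidableEq n]

theorem det_mul_det_toBlocks₂₂_of_mul_eq_one_s5 {A B : Matrix (m ⊕ n) (m ⊕ n) R}
    (hAB : A * B = 1) : A.det * B.toBlocks₂₂.det = A.toBlocks₁₁.det := by
  have hblocks := hAB
  rw [← fromBlocks_toBlocks A, ← fromBlocks_toBlocks B, fromBlocks_multiply, ← fromBlocks_one,
    fromBlocks_inj] at hblocks
  -- `A` maps the columns of `[[1, B₁₂], [0, B₂₂]]` to those of `[[A₁₁, 0], [A₂₁, 1]]`.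
  have hprod : A * fromBlocks 1 B.toBlocks₁₂ 0 B.toBlocks₂₂ =
      fromBlocks A.toBlocks₁₁ 0 A.toBlocks₂₁ 1 := by
    conv_lhs => rw [← fromBlocks_toBlocks A]
    rw [fromBlocks_multiply, hblocks.2.1, hblocks.2.2.2]
    simp
  simpa [det_fromBlocks_zero₂₁, det_fromBlocks_zero₁₂] using congrArg det hprod

end Jacobi

theorem det_mul_det_submatrix_natAdd_of_mul_eq_one_s5 {m n : ℕ}
    {A B : Matrix (Fin (m + n)) (Fin (m + n)) R} (hAB : A * B = 1) :
    A.det * (B.submatrix (Fin.natAdd m) (Fin.natAdd m)).det =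
      (A.submatrix (Fin.castAdd n) (Fin.castAdd n)).det := by
  have hAB' : A.submatrix finSumFinEquiv finSumFinEquiv * B.submatrix finSumFinEquiv finSumFinEquiv
      = 1 := by
    rw [submatrix_mul_equiv, hAB, submatrix_one_equiv]
  have h11 : (A.submatrix finSumFinEquiv finSumFinEquiv).toBlocks₁₁ =
      A.submatrix (Fin.castAdd n) (Fin.castAdd n) := by
    ext; simp [toBlocks₁₁]
  have h22 : (B.submatrix finSumFinEquiv finSumFinEquiv).toBlocks₂₂ =
      B.submatrix (Fin.natAdd m) (Fin.natAdd m) := by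
    ext; simp [toBlocks₂₂]
  rw [← h11, ← h22, ← det_mul_det_toBlocks₂₂_of_mul_eq_one_s5 hAB', det_submatrix_equiv_self]

end Matrix

theorem widom_stmt5 {m n : ℕ} (C : Matrix (Fin (m + n)) (Fin (m + n)) ℂ)
    (h : IsUnit (1 + C))
    (D : Matrix (Fin n) (Fin n) ℂ)
    (hD : D = (C * (1 + C)⁻¹).submatrix (Fin.natAdd m) (Fin.natAdd m))
    (hDdet : (1 - D).det ≠ 0)
    (E : Matrix (Fin n) (Fin n) ℂ)
    (hE : E = D * (1 - D)⁻¹) :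
    (1 + E).det =
      (1 + C).det /
        (∑ X : Finset (Fin m),
          (C.submatrix (fun i : {x // x ∈ X} => Fin.castAdd n i.1)
            (fun j : {x // x ∈ X} => Fin.castAdd n j.1)).det) := by
  have hdet : (1 + C).det ≠ 0 := ((isUnit_iff_isUnit_det _).mp h).ne_zero
  have hinv : (1 + C) * (1 + C)⁻¹ = 1 := mul_nonsing_inv _ (isUnit_iff_ne_zero.mpr hdet)
  have hcorner : 1 - D = (1 + C)⁻¹.submatrix (Fin.natAdd m) (Fin.natAdd m) := by
    have hCinv : C * (1 + C)⁻¹ = 1 - (1 + C)⁻¹ := by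
      rw [eq_sub_iff_add_eq, ← add_one_mul (α := Matrix _ _ ℂ), add_comm C 1, hinv]
    ext i j
    simp [hD, hCinv, one_apply]
  have hE' : 1 + E = (1 - D)⁻¹ := by
    rw [hE]
    calc 1 + D * (1 - D)⁻¹ = ((1 - D) + D) * (1 - D)⁻¹ := by
          rw [Matrix.add_mul, mul_nonsing_inv _ (isUnit_iff_ne_zero.mpr hDdet)]
      _ = (1 - D)⁻¹ := by rw [sub_add_cancel, Matrix.one_mul]
  have hsum : ∑ X : Finset (Fin m), (C.submatrix (fun i : {x // x ∈ X} => Fin.castAdd n i.1)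
      (fun j : {x // x ∈ X} => Fin.castAdd n j.1)).det =
      ((1 + C).submatrix (Fin.castAdd n) (Fin.castAdd n)).det := by
    have h11 : (1 + C).submatrix (Fin.castAdd n) (Fin.castAdd n) =
        1 + C.submatrix (Fin.castAdd n) (Fin.castAdd n) := by
      ext i j
      simp [one_apply, (Fin.castAdd_injective m n).eq_iff]
    rw [h11, det_one_add_eq_sum_det_submatrix_s5]
    rfl
  rw [hE', det_nonsing_inv, Ring.inverse_eq_inv', hsum,
    ← det_mul_det_submatrix_natAdd_of_mul_eq_one_s5 hinv, ← hcorner]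
  field_simp
end

section
/- The generating function of hook Schur functions satisfies 1 + (u+v) ∑_{p,q≥0} s_{(p|q)} u^p v^q = H(u)/H(−v), where H(z) = ∑_{n≥0} h_n z^n is the generating series of complete homogeneous symmetric functions and s_{(p|q)} is the Schur function of the hook partition with arm p and leg q (Frobenius coordinates (p|q)). -/
/-!
Put `e₀ = 1` and `e_{m+1} = s_{(0|m)}`, the elementary symmetric functions. Expanding the
Jacobi–Trudi determinant of `s_{(p|q+1)}` along its first column, whose only nonzero entries are
`h_{p+1}` and `h₀ = 1`, gives `s_{(p|q+1)} = h_{p+1} e_{q+1} - s_{(p+1|q)}`. Hence the coefficient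
of `u^p v^m` in `1 + (u+v) ∑ s_{(p|q)} u^p v^q` is `h_p e_m`, i.e. that series is `H(u) E(v)`.
Unrolling the recursion gives `s_{(p|q)} = ∑_{i ≤ q} (-1)^i h_{p+1+i} e_{q-i}`, whose case `p = 0`
is the relation `H(-v) E(v) = 1`.
-/

open Matrix

/-- `h` extended to integer indices by `0` for negative indices. -/
def hInt {R : Type*} [CommRing R] (h : ℕ → R) : ℤ → R :=
  fun k => if 0 ≤ k then h k.toNat else 0

/-- The hook Schur function `s_{(p|q)}`, i.e. the Schur function of the
partition `(p+1, 1^q)`, defined via the Jacobi–Trudi determinant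
`det [h_{λ_i - i + j}]` (indices `i, j` here are 0-based). -/
def hookSchur {R : Type*} [CommRing R] (h : ℕ → R) (p q : ℕ) : R :=
  (Matrix.of fun i j : Fin (q + 1) =>
    hInt h ((if (i : ℕ) = 0 then (p : ℤ) + 1 else 1) - (i : ℕ) + (j : ℕ))).det

open Finset

namespace HookSchur

variable {R : Type*} [CommRing R]

lemma hInt_natCast (h : ℕ → R) (n : ℕ) : hInt h n = h n := by
  simp [hInt]

lemma hInt_of_neg (h : ℕ → R) {k : ℤ} (hk : k < 0) : hInt h k = 0 :=
  if_neg (by omega)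

def jacobiTrudi (h : ℕ → R) (p q : ℕ) : Matrix (Fin (q + 1)) (Fin (q + 1)) R :=
  Matrix.of fun i j => hInt h ((if (i : ℕ) = 0 then (p : ℤ) + 1 else 1) - (i : ℕ) + (j : ℕ))

lemma hookSchur_eq_det (h : ℕ → R) (p q : ℕ) : hookSchur h p q = (jacobiTrudi h p q).det := rfl

lemma jacobiTrudi_zero_zero (h : ℕ → R) (p q : ℕ) : jacobiTrudi h p q 0 0 = h (p + 1) := by
  simpa [jacobiTrudi] using hInt_natCast h (p + 1)

lemma jacobiTrudi_one_zero (h : ℕ → R) (p q : ℕ) : jacobiTrudi h p (q + 1) 1 0 = h 0 := by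
  simp [jacobiTrudi, hInt]

lemma jacobiTrudi_succ_succ_zero (h : ℕ → R) (p q : ℕ) (i : Fin q) :
    jacobiTrudi h p (q + 1) i.succ.succ 0 = 0 := by
  simp only [jacobiTrudi, Matrix.of_apply, Fin.val_succ, Fin.val_zero]
  rw [if_neg (by omega)]
  exact hInt_of_neg h (by push_cast; omega)

lemma jacobiTrudi_submatrix_succ (h : ℕ → R) (p q : ℕ) :
    (jacobiTrudi h p (q + 1)).submatrix Fin.succ Fin.succ = jacobiTrudi h 0 q := by
  ext i j
  simp only [jacobiTrudi, Matrix.submatrix_apply, Matrix.of_apply, Fin.val_succ,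
    Nat.add_one_ne_zero, if_false, Nat.cast_zero, zero_add, ite_self]
  push_cast
  congr 1
  ring

lemma jacobiTrudi_submatrix_succAbove_one (h : ℕ → R) (p q : ℕ) :
    (jacobiTrudi h p (q + 1)).submatrix (Fin.succAbove 1) Fin.succ = jacobiTrudi h (p + 1) q := by
  ext i j
  cases i using Fin.cases with
  | zero =>
    rw [submatrix_apply, Fin.succAbove_ne_zero_zero one_ne_zero]
    simp only [jacobiTrudi, of_apply, Fin.val_zero, Fin.val_succ, if_true]
    push_cast
    congr 1
    ring
  | succ i =>
    simp only [jacobiTrudi, Matrix.submatrix_apply, Matrix.of_apply, Fin.val_succ]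
    rw [show (1 : Fin (q + 2)).succAbove i.succ = i.succ.succ from
      Fin.succ_succAbove_succ 0 i]
    simp only [Fin.val_succ, Nat.add_one_ne_zero, if_false]
    push_cast
    congr 1
    ring

lemma hookSchur_zero_right (h : ℕ → R) (p : ℕ) : hookSchur h p 0 = h (p + 1) := by
  rw [hookSchur_eq_det, Matrix.det_fin_one, jacobiTrudi_zero_zero]

/-- Laplace expansion along the first column of the Jacobi–Trudi matrix. -/
lemma hookSchur_succ_right (h : ℕ → R) (h0 : h 0 = 1) (p q : ℕ) :
    hookSchur h p (q + 1) = h (p + 1) * hookSchur h 0 q - hookSchur h (p + 1) q := by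
  rw [hookSchur_eq_det, Matrix.det_succ_column_zero, Fin.sum_univ_succ, Fin.sum_univ_succ]
  simp only [jacobiTrudi_succ_succ_zero, mul_zero, zero_mul, sum_const_zero, add_zero,
    Fin.succAbove_zero, jacobiTrudi_submatrix_succ, Fin.succ_zero_eq_one,
    jacobiTrudi_submatrix_succAbove_one, jacobiTrudi_zero_zero, jacobiTrudi_one_zero, h0,
    hookSchur_eq_det, Fin.val_zero, Fin.val_one, pow_zero, pow_one]
  ring

/-- The elementary symmetric functions, `e₀ = 1` and `e_{m+1} = s_{(0|m)} = s_{(1^{m+1})}`. -/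
def elem (h : ℕ → R) : ℕ → R
  | 0 => 1
  | m + 1 => hookSchur h 0 m

lemma elem_succ (h : ℕ → R) (m : ℕ) : elem h (m + 1) = hookSchur h 0 m := rfl

lemma hookSchur_eq_sum (h : ℕ → R) (h0 : h 0 = 1) (p q : ℕ) :
    hookSchur h p q = ∑ i ∈ range (q + 1), (-1) ^ i * h (p + i + 1) * elem h (q - i) := by
  induction q generalizing p with
  | zero => simp [hookSchur_zero_right, elem]
  | succ q ih =>
    rw [hookSchur_succ_right h h0, ih (p + 1), sum_range_succ' _ (q + 1)]
    simp only [Nat.add_sub_add_right, Nat.sub_zero, elem_succ, pow_succ, mul_neg_one, neg_mul,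
      sum_neg_distrib, ← add_assoc, add_right_comm p 1]
    ring

/-- The coefficient relation of `H(-v) E(v) = 1`. -/
lemma sum_neg_one_pow_mul_elem (h : ℕ → R) (h0 : h 0 = 1) (q : ℕ) :
    ∑ j ∈ range (q + 1), (-1) ^ j * h j * elem h (q - j) = if q = 0 then 1 else 0 := by
  cases q with
  | zero => simp [elem, h0]
  | succ q =>
    rw [sum_range_succ', Nat.sub_zero, elem_succ, hookSchur_eq_sum h h0 0 q]
    simp only [Nat.add_sub_add_right, pow_succ, mul_neg_one, neg_mul, sum_neg_distrib, zero_add,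
      pow_zero, h0, one_mul, Nat.add_one_ne_zero, if_false]
    ring

/-- The coefficient of `u^p v^m` in `1 + (u+v) ∑ s_{(p|q)} u^p v^q` is `h_p e_m`. -/
lemma hookSeries_coeff (h : ℕ → R) (h0 : h 0 = 1) (p m : ℕ) :
    (if p = 0 ∧ m = 0 then 1 else 0) + (if p = 0 then 0 else hookSchur h (p - 1) m) +
      (if m = 0 then 0 else hookSchur h p (m - 1)) = h p * elem h m := by
  rcases p with _ | p <;> rcases m with _ | m
  · simp [elem, h0]
  · simp [elem, h0]
  · simp [elem, hookSchur_zero_right]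
  · simp [elem, hookSchur_succ_right h h0]

end HookSchur

open HookSchur

/-- The identity `H(-v) · (1 + (u+v) ∑ s_{(p|q)} u^p v^q) = H(u)`, read off at the coefficient of
`u^p v^q`. -/
theorem widom_stmt12 {R : Type*} [CommRing R] (h : ℕ → R) (h0 : h 0 = 1) :
    ∀ p q : ℕ,
      ∑ j ∈ Finset.range (q + 1), (-1 : R) ^ j * h j *
        ((if p = 0 ∧ q - j = 0 then 1 else 0) +
          (if p = 0 then 0 else hookSchur h (p - 1) (q - j)) +
          (if q - j = 0 then 0 else hookSchur h p (q - j - 1)))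
      = if q = 0 then h p else 0 := by
  intro p q
  simp_rw [hookSeries_coeff h h0, mul_left_comm _ (h p), ← mul_sum,
    sum_neg_one_pow_mul_elem h h0, mul_ite, mul_one, mul_zero]
end

section
/- Giambelli's formula: for any partition λ with Frobenius coordinates (p_1,…,p_d | q_1,…,q_d), the Schur function satisfies s_λ = det[s_{(p_i|q_j)}]_{i,j=1}^d, where s_{(p|q)} denotes the hook Schur function. -/
open Matrix

namespace GiambelliAux

open Equiv

variable {R : Type*} [CommRing R]

lemma hInt_coe (h : ℕ → R) (k : ℕ) : hInt h (k : ℤ) = h k := by simp [hInt]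

lemma hInt_neg (h : ℕ → R) {k : ℤ} (hk : k < 0) : hInt h k = 0 := by
  simp [hInt, not_le.2 hk]

lemma hInt_congr (h : ℕ → R) {a b : ℤ} (hab : a = b) : hInt h a = hInt h b := by rw [hab]

/-- Jacobi–Trudi determinants are stable under adding trailing zero parts. -/
lemma jt_stab (h : ℕ → R) (h0 : h 0 = 1) (g : ℕ → ℕ) (n : ℕ)
    (hg : ∀ k, n ≤ k → g k = 0) :
    ∀ m, n ≤ m →
      (Matrix.of fun i j : Fin m => hInt h ((g i : ℤ) - (i : ℕ) + (j : ℕ))).det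
        = (Matrix.of fun i j : Fin n => hInt h ((g i : ℤ) - (i : ℕ) + (j : ℕ))).det := by
  intro m hm
  induction m, hm using Nat.le_induction with
  | base => rfl
  | succ m hm ih =>
    rw [← ih]
    set M : Matrix (Fin (m+1)) (Fin (m+1)) R :=
      Matrix.of fun i j : Fin (m+1) => hInt h ((g i : ℤ) - (i : ℕ) + (j : ℕ)) with hM
    have key : M.submatrix finSumFinEquiv finSumFinEquiv =
        Matrix.fromBlocks
          (Matrix.of fun i j : Fin m => hInt h ((g i : ℤ) - (i : ℕ) + (j : ℕ)))
          (Matrix.of fun (i : Fin m) (j : Fin 1) => hInt h ((g i : ℤ) - (i : ℕ) + (m : ℕ)))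
          0 1 := by
      ext x y
      cases x with
      | inl i =>
        cases y with
        | inl j => simp [hM]
        | inr j => simp [hM]
      | inr i =>
        have hi : ((Fin.natAdd m i : Fin (m+1)) : ℕ) = m := by
          have := i.isLt
          simp [Fin.coe_natAdd]
        have hgm : g m = 0 := hg m hm
        cases y with
        | inl j =>
          have hj : ((Fin.castAdd 1 j : Fin (m+1)) : ℕ) = (j : ℕ) := rfl
          simp only [submatrix_apply, finSumFinEquiv_apply_right, finSumFinEquiv_apply_left,
            fromBlocks_apply₂₁, hM, of_apply, hi, hj, hgm, Matrix.zero_apply]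
          apply hInt_neg
          have := j.isLt; omega
        | inr j =>
          have hj : ((Fin.natAdd m j : Fin (m+1)) : ℕ) = m := by
            have := j.isLt
            simp [Fin.coe_natAdd]
          simp only [submatrix_apply, finSumFinEquiv_apply_right, fromBlocks_apply₂₂, hM,
            of_apply, hi, hj, hgm]
          rw [hInt_congr h (show ((0:ℕ):ℤ) - (m:ℕ) + (m:ℕ) = ((0:ℕ):ℤ) by ring), hInt_coe, h0]
          rw [Matrix.one_apply]
          simp [Fin.ext_iff]
    have := Matrix.det_submatrix_equiv_self (finSumFinEquiv : Fin m ⊕ Fin 1 ≃ Fin (m+1)) M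
    rw [← this, key, Matrix.det_fromBlocks_zero₂₁]
    simp


/-- An explicit cycle on the interval `[δ, δ+r]` of `Fin N`. -/
lemma cycle_shift {N : ℕ} (δ r : Fin N) (hδr : (δ : ℕ) + (r : ℕ) < N) :
    ∃ c : Equiv.Perm (Fin N),
      Equiv.Perm.sign c = (-1) ^ (r : ℕ) ∧
      (∀ x : Fin N, (x : ℕ) < (δ : ℕ) → c x = x) ∧
      (∀ x : Fin N, (δ : ℕ) ≤ (x : ℕ) → (x : ℕ) < (δ : ℕ) + (r : ℕ) →
        (c x : ℕ) = (x : ℕ) + 1) ∧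
      (c ⟨(δ : ℕ) + (r : ℕ), hδr⟩ = δ) ∧
      (∀ x : Fin N, (δ : ℕ) + (r : ℕ) < (x : ℕ) → c x = x) := by
  obtain ⟨N', rfl⟩ : ∃ N', N = N' + 1 := ⟨N - 1, by omega⟩
  refine ⟨(Equiv.addLeft δ) * (Fin.cycleRange r) * (Equiv.addLeft δ)⁻¹, ?_, ?_, ?_, ?_, ?_⟩
  · rw [_root_.map_mul, _root_.map_mul, map_inv, Fin.sign_cycleRange]
    generalize Equiv.Perm.sign (Equiv.addLeft δ) = u
    rcases Int.units_eq_one_or u with h | h <;> simp [h]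
  · intro x hx
    have happ : ((Equiv.addLeft δ) * (Fin.cycleRange r) * (Equiv.addLeft δ)⁻¹) x
        = δ + Fin.cycleRange r (-δ + x) := by
      simp [Equiv.Perm.mul_apply]
    rw [happ]
    have hy : ((-δ + x : Fin (N' + 1)) : ℕ) = N' + 1 - (δ : ℕ) + (x : ℕ) := by
      rw [Fin.add_def, Fin.neg_def]
      simp only [Fin.val_mk]
      rw [Nat.mod_add_mod, Nat.mod_eq_of_lt (by omega)]
    have hfix : Fin.cycleRange r (-δ + x) = -δ + x := by
      apply Fin.cycleRange_of_gt
      rw [Fin.lt_iff_val_lt_val, hy]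
      omega
    rw [hfix, add_neg_cancel_left]
  · intro x hx1 hx2
    have happ : ((Equiv.addLeft δ) * (Fin.cycleRange r) * (Equiv.addLeft δ)⁻¹) x
        = δ + Fin.cycleRange r (-δ + x) := by
      simp [Equiv.Perm.mul_apply]
    rw [happ]
    have hy : ((-δ + x : Fin (N' + 1)) : ℕ) = (x : ℕ) - (δ : ℕ) := by
      rw [Fin.add_def, Fin.neg_def]
      simp only [Fin.val_mk]
      rw [Nat.mod_add_mod]
      rw [show N' + 1 - (δ : ℕ) + (x : ℕ) = ((x : ℕ) - (δ : ℕ)) + (N' + 1) by omega,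
        Nat.add_mod_right, Nat.mod_eq_of_lt (by omega)]
    have hcr : Fin.cycleRange r (-δ + x) = (-δ + x) + 1 := by
      apply Fin.cycleRange_of_lt
      rw [Fin.lt_iff_val_lt_val, hy]
      omega
    rw [hcr]
    have h1v : ((1 : Fin (N' + 1)) : ℕ) = 1 := by
      rw [Fin.val_one']
      apply Nat.mod_eq_of_lt
      omega
    rw [Fin.add_def, Fin.add_def, hy, h1v]
    simp only [Fin.val_mk]
    rw [Nat.add_mod_mod, Nat.mod_eq_of_lt (by omega)]
    omega
  · have happ : ((Equiv.addLeft δ) * (Fin.cycleRange r) * (Equiv.addLeft δ)⁻¹)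
        ⟨(δ : ℕ) + (r : ℕ), hδr⟩
        = δ + Fin.cycleRange r (-δ + ⟨(δ : ℕ) + (r : ℕ), hδr⟩) := by
      simp [Equiv.Perm.mul_apply]
    rw [happ]
    have hy : (-δ + (⟨(δ : ℕ) + (r : ℕ), hδr⟩ : Fin (N' + 1))) = r := by
      apply Fin.ext
      rw [Fin.add_def, Fin.neg_def]
      simp only [Fin.val_mk]
      rw [Nat.mod_add_mod]
      rw [show N' + 1 - (δ : ℕ) + ((δ : ℕ) + (r : ℕ)) = (r : ℕ) + (N' + 1) by omega,
        Nat.add_mod_right, Nat.mod_eq_of_lt (by omega)]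
    rw [hy, Fin.cycleRange_self, add_zero]
  · intro x hx
    have happ : ((Equiv.addLeft δ) * (Fin.cycleRange r) * (Equiv.addLeft δ)⁻¹) x
        = δ + Fin.cycleRange r (-δ + x) := by
      simp [Equiv.Perm.mul_apply]
    rw [happ]
    have hy : ((-δ + x : Fin (N' + 1)) : ℕ) = (x : ℕ) - (δ : ℕ) := by
      rw [Fin.add_def, Fin.neg_def]
      simp only [Fin.val_mk]
      rw [Nat.mod_add_mod]
      rw [show N' + 1 - (δ : ℕ) + (x : ℕ) = ((x : ℕ) - (δ : ℕ)) + (N' + 1) by omega,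
        Nat.add_mod_right, Nat.mod_eq_of_lt (by omega)]
    have hfix : Fin.cycleRange r (-δ + x) = -δ + x := by
      apply Fin.cycleRange_of_gt
      rw [Fin.lt_iff_val_lt_val, hy]
      omega
    rw [hfix, add_neg_cancel_left]


/-- Sign of a permutation of `Fin N` that is strictly decreasing on `[0,d)` and strictly
increasing on `[d,N)`. -/
lemma sign_block : ∀ (d : ℕ) {N : ℕ} (π : Equiv.Perm (Fin N)),
    (∀ i j : Fin N, (i : ℕ) < (j : ℕ) → (j : ℕ) < d → π j < π i) →
    (∀ i j : Fin N, d ≤ (i : ℕ) → i < j → π i < π j) →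
    Equiv.Perm.sign π = (-1) ^ (∑ i : Fin N, if (i : ℕ) < d then ((π i : Fin N) : ℕ) else 0) := by
  intro d
  induction d with
  | zero =>
    intro N π _ hinc
    have hmono : StrictMono ⇑π := fun i j hij => hinc i j (Nat.zero_le _) hij
    have : ⇑π = id := by
      have hw : WellFoundedLT (Fin N) := inferInstance
      refine (hmono.range_inj (strictMono_id : StrictMono (id : Fin N → Fin N))).1 ?_
      simp [Set.range_eq_univ.2 π.surjective]
    have hπ : π = 1 := Equiv.ext fun x => congrFun this x
    simp [hπ]
  | succ d ihd =>
    intro N π hdec hinc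
    by_cases hdN : d < N
    case neg =>
      rw [ihd π (fun i j hij hj => hdec i j hij (by omega))
        (fun i j hi _ => absurd i.isLt (by omega))]
      congr 1
      refine Finset.sum_congr rfl fun i _ => ?_
      have h1 : (i : ℕ) < d := lt_of_lt_of_le i.isLt (not_lt.1 hdN)
      rw [if_pos h1, if_pos (by omega)]
    case pos =>
      set qv : ℕ := ((π ⟨d, hdN⟩ : Fin N) : ℕ) with hqv
      have hqvN : qv < N := (π ⟨d, hdN⟩).isLt
      -- everything in the first block has value at least qv
      have f1 : ∀ j : Fin N, (j : ℕ) ≤ d → qv ≤ ((π j : Fin N) : ℕ) := by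
        intro j hj
        rcases eq_or_lt_of_le hj with heq | hlt
        · have : j = ⟨d, hdN⟩ := Fin.ext heq
          rw [this]
        · have h2 := hdec j ⟨d, hdN⟩ (by simpa using hlt) (by simp)
          rw [Fin.lt_iff_val_lt_val] at h2
          omega
      -- the small values sit right after position d, in order
      have f2 : ∀ k, k < qv → ∃ hk : d + 1 + k < N, ((π ⟨d + 1 + k, hk⟩ : Fin N) : ℕ) = k := by
        intro k
        induction k using Nat.strong_induction_on with
        | _ k ihk =>
          intro hkq
          have hkN : k < N := lt_trans hkq hqvN
          set m := π.symm ⟨k, hkN⟩ with hm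
          have hπm : π m = ⟨k, hkN⟩ := Equiv.apply_symm_apply _ _
          have hmd : d + 1 ≤ (m : ℕ) := by
            by_contra hc
            push_neg at hc
            have h2 := f1 m (by omega)
            rw [hπm] at h2
            simp at h2
            omega
          have hstep : ∀ k', k' < k → d + 1 + k' < (m : ℕ) := by
            intro k' hk'
            obtain ⟨hk'N, hπk'⟩ := ihk k' hk' (by omega)
            by_contra hc
            push_neg at hc
            rcases eq_or_lt_of_le hc with heq | hlt2
            · have : m = ⟨d + 1 + k', hk'N⟩ := Fin.ext (by simp only [Fin.val_mk]; omega)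
              rw [this] at hπm
              rw [hπm] at hπk'
              simp at hπk'
              omega
            · have h3 := hinc m ⟨d + 1 + k', hk'N⟩ (by omega) (by
                rw [Fin.lt_iff_val_lt_val]; exact hlt2)
              rw [hπm, Fin.lt_iff_val_lt_val] at h3
              simp only [Fin.val_mk] at h3
              omega
          have hmge : d + 1 + k ≤ (m : ℕ) := by
            rcases Nat.eq_zero_or_pos k with rfl | hk0
            · omega
            · have := hstep (k - 1) (by omega); omega
          have hkNlt : d + 1 + k < N := lt_of_le_of_lt hmge m.isLt
          refine ⟨hkNlt, ?_⟩
          have hmle : (m : ℕ) ≤ d + 1 + k := by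
            by_contra hc
            push_neg at hc
            have h4 := hinc ⟨d + 1 + k, hkNlt⟩ m (by simp) (by
              rw [Fin.lt_iff_val_lt_val]; simpa using hc)
            rw [hπm, Fin.lt_iff_val_lt_val] at h4
            simp only [Fin.val_mk] at h4
            set k'' := ((π ⟨d + 1 + k, hkNlt⟩ : Fin N) : ℕ) with hk''
            obtain ⟨hk''N, hπk''⟩ := ihk k'' h4 (by omega)
            have h5 : (⟨d + 1 + k'', hk''N⟩ : Fin N) = ⟨d + 1 + k, hkNlt⟩ := by
              apply π.injective
              apply Fin.ext
              rw [hπk'']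
            have h6 : d + 1 + k'' = d + 1 + k := congrArg Fin.val h5
            omega
          have : m = ⟨d + 1 + k, hkNlt⟩ := Fin.ext (by simp only [Fin.val_mk]; omega)
          rw [← this, hπm]
      have f3 : d + qv < N := by
        rcases Nat.eq_zero_or_pos qv with h0 | hpos
        · omega
        · obtain ⟨hk, _⟩ := f2 (qv - 1) (by omega)
          omega
      -- the cycle
      obtain ⟨c, hsc, hc1, hc2, hc3, hc4⟩ :=
        cycle_shift (⟨d, hdN⟩ : Fin N) (π ⟨d, hdN⟩) (by simpa using f3)
      set π' := π * c with hπ'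
      have hπ'low : ∀ x : Fin N, (x : ℕ) < d → π' x = π x := by
        intro x hx
        rw [hπ', Equiv.Perm.mul_apply, hc1 x (by simpa using hx)]
      have hab : ∀ x : Fin N, d ≤ (x : ℕ) → (x : ℕ) ≤ d + qv →
          ((π' x : Fin N) : ℕ) = (x : ℕ) - d := by
        intro x hx1 hx2
        rcases eq_or_lt_of_le hx2 with heq | hlt
        · have hx' : x = ⟨(⟨d, hdN⟩ : Fin N) + (π ⟨d, hdN⟩ : Fin N), by simpa using f3⟩ := by
            apply Fin.ext; simp only [Fin.val_mk]; omega
          rw [hπ', Equiv.Perm.mul_apply, hx', hc3]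
          omega
        · obtain ⟨hk, hv⟩ := f2 ((x : ℕ) - d) (by omega)
          have hcx : c x = ⟨d + 1 + ((x : ℕ) - d), hk⟩ := by
            apply Fin.ext
            rw [hc2 x (by simpa using hx1) (by simpa using hlt)]
            simp only [Fin.val_mk]
            omega
          rw [hπ', Equiv.Perm.mul_apply, hcx, hv]
      have hcgt : ∀ x : Fin N, d + qv < (x : ℕ) → π' x = π x ∧ qv < ((π x : Fin N) : ℕ) := by
        intro x hx
        constructor
        · rw [hπ', Equiv.Perm.mul_apply, hc4 x (by simpa using hx)]
        · have hne : (π x : Fin N) ≠ π ⟨d, hdN⟩ := by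
            intro hcon
            have := π.injective hcon
            have := congrArg Fin.val this
            simp only [Fin.val_mk] at this
            omega
          have hnev : ((π x : Fin N) : ℕ) ≠ qv := fun hcon => hne (Fin.ext hcon)
          rcases Nat.eq_zero_or_pos qv with h0 | hpos
          · omega
          · obtain ⟨hk, hv⟩ := f2 (qv - 1) (by omega)
            have h5 := hinc ⟨d + 1 + (qv - 1), hk⟩ x
              (by simp only [Fin.val_mk]; omega)
              (by rw [Fin.lt_iff_val_lt_val]; simp only [Fin.val_mk]; omega)
            rw [Fin.lt_iff_val_lt_val, hv] at h5
            omega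
      have hdec' : ∀ i j : Fin N, (i : ℕ) < (j : ℕ) → (j : ℕ) < d → π' j < π' i := by
        intro i j hij hj
        rw [hπ'low i (by omega), hπ'low j hj]
        exact hdec i j hij (by omega)
      have hinc' : ∀ i j : Fin N, d ≤ (i : ℕ) → i < j → π' i < π' j := by
        intro i j hi hij
        rw [Fin.lt_iff_val_lt_val] at hij ⊢
        by_cases hj1 : (j : ℕ) ≤ d + qv
        · rw [hab i hi (by omega), hab j (by omega) hj1]
          omega
        · push_neg at hj1
          obtain ⟨hj2, hj3⟩ := hcgt j (by omega)
          rw [hj2]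
          by_cases hi1 : (i : ℕ) ≤ d + qv
          · rw [hab i hi hi1]
            omega
          · push_neg at hi1
            obtain ⟨hi2, _⟩ := hcgt i (by omega)
            rw [hi2]
            rw [← Fin.lt_iff_val_lt_val]
            exact hinc i j (by omega) (by rw [Fin.lt_iff_val_lt_val]; omega)
      have IH := ihd π' hdec' hinc'
      have hsum' : (∑ i : Fin N, if (i : ℕ) < d then ((π' i : Fin N) : ℕ) else 0)
          = (∑ i : Fin N, if (i : ℕ) < d then ((π i : Fin N) : ℕ) else 0) := by
        refine Finset.sum_congr rfl fun i _ => ?_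
        by_cases hi : (i : ℕ) < d
        · rw [if_pos hi, if_pos hi, hπ'low i hi]
        · rw [if_neg hi, if_neg hi]
      have hsum : (∑ i : Fin N, if (i : ℕ) < d + 1 then ((π i : Fin N) : ℕ) else 0)
          = (∑ i : Fin N, if (i : ℕ) < d then ((π i : Fin N) : ℕ) else 0) + qv := by
        have key : ∀ i : Fin N, (if (i : ℕ) < d + 1 then ((π i : Fin N) : ℕ) else 0)
            = (if (i : ℕ) < d then ((π i : Fin N) : ℕ) else 0)
              + (if i = ⟨d, hdN⟩ then qv else 0) := by
          intro i
          by_cases h1 : (i : ℕ) < d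
          · have : i ≠ ⟨d, hdN⟩ := by
              intro hcon; have := congrArg Fin.val hcon; simp only [Fin.val_mk] at this; omega
            rw [if_pos (by omega), if_pos h1, if_neg this, add_zero]
          · by_cases h2 : (i : ℕ) = d
            · have hi' : i = ⟨d, hdN⟩ := Fin.ext (by simp only [Fin.val_mk]; omega)
              rw [if_pos (by omega), if_neg h1, if_pos hi', hi']
              omega
            · have : i ≠ ⟨d, hdN⟩ := by
                intro hcon; have := congrArg Fin.val hcon; simp only [Fin.val_mk] at this; omega
              rw [if_neg (by omega), if_neg h1, if_neg this, add_zero]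
        rw [Finset.sum_congr rfl fun i _ => key i, Finset.sum_add_distrib]
        congr 1
        simp
      have hππ' : π = π' * c⁻¹ := by
        rw [hπ', mul_inv_cancel_right]
      have hfin : Equiv.Perm.sign π = Equiv.Perm.sign π' * (Equiv.Perm.sign c)⁻¹ := by
        conv_lhs => rw [hππ']
        rw [_root_.map_mul, map_inv]
      rw [hfin, IH, hsc, hsum', hsum, pow_add]
      have hu : (((-1 : ℤˣ)) ^ qv)⁻¹ = (-1 : ℤˣ) ^ qv := by
        rcases Int.units_eq_one_or ((-1 : ℤˣ) ^ qv) with hq | hq <;> rw [hq] <;> rfl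
      rw [← hqv, hu]

lemma hook_minor (h : ℕ → R) (h0 : h 0 = 1) {N : ℕ} (p q : ℕ) (hq : q < N) :
    ((Matrix.of fun m j : Fin N => hInt h (((j : ℕ) : ℤ) - ((m : ℕ) : ℤ))).updateRow ⟨q, hq⟩
        (fun j => hInt h ((p : ℤ) + 1 + (j : ℕ)))).det
      = (-1 : R) ^ q * hookSchur h p q := by
  obtain ⟨N', rfl⟩ : ∃ N', N = N' + 1 := ⟨N - 1, by omega⟩
  set g : ℕ → ℕ := fun k => if k = 0 then p + 1 else if k ≤ q then 1 else 0 with hgdef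
  set Mhook : Matrix (Fin (N' + 1)) (Fin (N' + 1)) R :=
    Matrix.of fun k j : Fin (N' + 1) => hInt h ((g k : ℤ) - (k : ℕ) + (j : ℕ)) with hMhook
  set ρ : Equiv.Perm (Fin (N' + 1)) := Fin.cycleRange ⟨q, hq⟩ with hρdef
  have key : ((Matrix.of fun m j : Fin (N' + 1) =>
        hInt h (((j : ℕ) : ℤ) - ((m : ℕ) : ℤ))).updateRow ⟨q, hq⟩
        (fun j => hInt h ((p : ℤ) + 1 + (j : ℕ))))
      = Mhook.submatrix ρ id := by
    ext k j
    rcases lt_trichotomy (k : ℕ) q with h1 | h1 | h1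
    · have hρk : ((ρ k : Fin (N' + 1)) : ℕ) = (k : ℕ) + 1 :=
        Fin.coe_cycleRange_of_lt (by rw [Fin.lt_iff_val_lt_val]; simpa using h1)
      have hne : k ≠ ⟨q, hq⟩ := by
        intro hcon; have := congrArg Fin.val hcon; simp only [Fin.val_mk] at this; omega
      rw [Matrix.updateRow_ne hne]
      simp only [hMhook, submatrix_apply, id_eq, Matrix.of_apply, hρk]
      have hgk : g ((k : ℕ) + 1) = 1 := by
        simp only [hgdef]
        rw [if_neg (by omega), if_pos (by omega)]
      rw [hgk]
      exact hInt_congr h (by push_cast; ring)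
    · have hk : k = ⟨q, hq⟩ := Fin.ext (by simpa using h1)
      rw [hk, Matrix.updateRow_self]
      have hρk : ρ (⟨q, hq⟩ : Fin (N' + 1)) = 0 := Fin.cycleRange_self _
      simp only [hMhook, submatrix_apply, id_eq, hρk, Matrix.of_apply]
      have hg0 : g ((0 : Fin (N' + 1)) : ℕ) = p + 1 := by simp [hgdef]
      rw [hg0]
      exact hInt_congr h (by push_cast; simp)
    · have hρk : ρ k = k :=
        Fin.cycleRange_of_gt (by rw [Fin.lt_iff_val_lt_val]; simpa using h1)
      have hne : k ≠ ⟨q, hq⟩ := by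
        intro hcon; have := congrArg Fin.val hcon; simp only [Fin.val_mk] at this; omega
      rw [Matrix.updateRow_ne hne]
      simp only [hMhook, submatrix_apply, id_eq, hρk, Matrix.of_apply]
      have hgk : g (k : ℕ) = 0 := by
        simp only [hgdef]
        rw [if_neg (by omega), if_neg (by omega)]
      rw [hgk]
      exact hInt_congr h (by push_cast; ring)
  rw [key, Matrix.det_permute]
  have hsign : Equiv.Perm.sign ρ = (-1 : ℤˣ) ^ q := by
    rw [hρdef, Fin.sign_cycleRange]
  have hhook : Mhook.det = hookSchur h p q := by
    rw [hMhook, jt_stab h h0 g (q + 1)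
      (fun k hk => by simp only [hgdef]; rw [if_neg (by omega), if_neg (by omega)])
      (N' + 1) (by omega)]
    unfold hookSchur
    congr 1
    ext i j
    simp only [Matrix.of_apply]
    by_cases hi : (i : ℕ) = 0
    · rw [show g (i : ℕ) = p + 1 by simp [hgdef, hi], if_pos hi]
      exact hInt_congr h (by push_cast; ring)
    · have hile : (i : ℕ) ≤ q := by have := i.isLt; omega
      rw [show g (i : ℕ) = 1 by simp only [hgdef]; rw [if_neg hi, if_pos hile], if_neg hi]
      exact hInt_congr h (by push_cast; ring)
  rw [hhook, hsign]
  congr 1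
  rw [Units.val_pow_eq_pow_val]
  push_cast
  ring


end GiambelliAux

open GiambelliAux in
/-- Giambelli's formula.  The partition `λ` is encoded as an antitone function
`f : ℕ → ℕ` (so `f k` is the `(k+1)`-st part), vanishing from `N` on.  The Schur
function `s_λ` is given by the Jacobi–Trudi determinant
`det [h_{λ_i - i + j}]_{i,j=1}^N`.  With `d` the number of diagonal boxes and
Frobenius coordinates `p_k = λ_{k+1} - (k+1)`, `q_k = λ'_{k+1} - (k+1)`
(`0 ≤ k < d`, `λ'` the conjugate partition), Giambelli's formula states
`s_λ = det [s_{(p_i|q_j)}]_{i,j=0}^{d-1}`.  Since Schur functions are integer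
polynomials in the algebraically independent `h_1, h_2, …` (with `h_0 = 1`),
the identity is stated for any commutative ring `R` and `h : ℕ → R`, `h 0 = 1`. -/
theorem widom_stmt13 {R : Type*} [CommRing R] (h : ℕ → R) (h0 : h 0 = 1)
    (f : ℕ → ℕ) (hf : Antitone f) (N : ℕ) (hN : ∀ i, N ≤ i → f i = 0)
    (d : ℕ) (hd : d = ((Finset.range N).filter fun i => i < f i).card)
    (P Q : ℕ → ℕ)
    (hP : ∀ k, P k = f k - (k + 1))
    (hQ : ∀ k, Q k = ((Finset.range N).filter fun i => k < f i).card - (k + 1)) :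
    (Matrix.of fun i j : Fin N => hInt h ((f i : ℤ) - (i : ℕ) + (j : ℕ))).det
      = (Matrix.of fun i j : Fin d => hookSchur h (P i) (Q j)).det := by
  classical
  have hdN : d ≤ N := by
    rw [hd]
    exact le_trans (Finset.card_filter_le _ _) (by simp)
  have hdc : ∀ i j : ℕ, i ≤ j → j ∈ (Finset.range N).filter (fun i => i < f i) →
      i ∈ (Finset.range N).filter (fun i => i < f i) := by
    intro i j hij hj
    simp only [Finset.mem_filter, Finset.mem_range] at hj ⊢
    have := hf hij
    exact ⟨by omega, by omega⟩
  have hmem : ∀ i, i ∈ (Finset.range N).filter (fun i => i < f i) ↔ i < d := by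
    intro i
    constructor
    · intro hi
      have hsub : Finset.range (i + 1) ⊆ (Finset.range N).filter (fun i => i < f i) := by
        intro x hx
        exact hdc x i (by simpa [Nat.lt_succ_iff] using hx) hi
      have := Finset.card_le_card hsub
      simp only [Finset.card_range] at this
      omega
    · intro hi
      by_contra hcon
      have hsub : (Finset.range N).filter (fun i => i < f i) ⊆ Finset.range i := by
        intro x hx
        simp only [Finset.mem_range]
        by_contra hx2
        exact hcon (hdc i x (by omega) hx)
      have := Finset.card_le_card hsub
      simp only [Finset.card_range] at this
      omega
  have hlow : ∀ i, i < d → i < f i := fun i hi => (Finset.mem_filter.mp ((hmem i).mpr hi)).2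
  have hhigh : ∀ i, d ≤ i → f i ≤ i := by
    intro i hi
    by_contra hcon
    push_neg at hcon
    have hiN : i < N := by
      by_contra h2; push_neg at h2; rw [hN i h2] at hcon; omega
    have := (hmem i).mp (Finset.mem_filter.mpr ⟨Finset.mem_range.mpr hiN, hcon⟩)
    omega
  have hFN : ∀ j : ℕ, ((Finset.range N).filter fun i => j < f i).card ≤ N :=
    fun j => le_trans (Finset.card_filter_le _ _) (by simp)
  have hiff : ∀ i j : ℕ, i < N →
      (j < f i ↔ i < ((Finset.range N).filter fun i' => j < f i').card) := by
    intro i j hiN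
    constructor
    · intro hj
      have hsub : Finset.range (i + 1) ⊆ (Finset.range N).filter fun i' => j < f i' := by
        intro x hx
        simp only [Finset.mem_range] at hx
        refine Finset.mem_filter.mpr ⟨Finset.mem_range.mpr (by omega), ?_⟩
        have := hf (show x ≤ i by omega)
        omega
      have := Finset.card_le_card hsub
      simp only [Finset.card_range] at this
      omega
    · intro hj
      by_contra hcon
      push_neg at hcon
      have hsub : ((Finset.range N).filter fun i' => j < f i') ⊆ Finset.range i := by
        intro x hx
        simp only [Finset.mem_filter, Finset.mem_range] at hx
        simp only [Finset.mem_range]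
        by_contra h2
        push_neg at h2
        have := hf h2
        omega
      have := Finset.card_le_card hsub
      simp only [Finset.card_range] at this
      omega
  have hFge : ∀ j, j < d → j + 1 ≤ ((Finset.range N).filter fun i' => j < f i').card := by
    intro j hj
    have := (hiff j j (by omega)).1 (hlow j hj)
    omega
  have hQlt : ∀ j, j < d → Q j < N := by
    intro j hj
    rw [hQ]
    have h1 := hFN j
    have h2 := hFge j hj
    omega
  have hQdec : ∀ j j' : ℕ, j < j' → j' < d → Q j' < Q j := by
    intro j j' hjj hj'
    have h1 : ((Finset.range N).filter fun i' => j' < f i').card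
        ≤ ((Finset.range N).filter fun i' => j < f i').card := by
      apply Finset.card_le_card
      intro x hx
      simp only [Finset.mem_filter, Finset.mem_range] at hx ⊢
      exact ⟨hx.1, by omega⟩
    have h2 := hFge j' hj'
    rw [hQ, hQ]
    omega
  have hdisj : ∀ i j : ℕ, i < N → d ≤ i → j < d → i - f i ≠ Q j := by
    intro i j hiN hdi hjd hcon
    have h1 : f i ≤ i := hhigh i hdi
    have h2 := hFge j hjd
    rw [hQ] at hcon
    by_cases hc : j < f i
    · have := (hiff i j hiN).1 hc
      omega
    · push_neg at hc
      have h3 : ¬ i < ((Finset.range N).filter fun i' => j < f i').card :=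
        fun h2' => by have := (hiff i j hiN).2 h2'; omega
      omega
  have hmonohigh : ∀ i j : ℕ, d ≤ i → i < j → i - f i < j - f j := by
    intro i j hdi hij
    have h1 := hf (le_of_lt hij)
    have h2 := hhigh i hdi
    omega
  -- the permutation π
  set π0 : Fin N → Fin N := fun i =>
    if h' : (i : ℕ) < d then ⟨Q i, hQlt i h'⟩
    else ⟨(i : ℕ) - f i, by have := i.isLt; omega⟩ with hπ0
  have hπ0inj : Function.Injective π0 := by
    intro a b hab
    have habv := congrArg Fin.val hab
    by_cases ha : (a : ℕ) < d <;> by_cases hb : (b : ℕ) < d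
    · simp only [hπ0, dif_pos ha, dif_pos hb, Fin.val_mk] at habv
      apply Fin.ext
      rcases lt_trichotomy (a : ℕ) (b : ℕ) with hc | hc | hc
      · have := hQdec a b hc hb; omega
      · exact hc
      · have := hQdec b a hc ha; omega
    · exfalso
      push_neg at hb
      simp only [hπ0, dif_pos ha, dif_neg (by omega : ¬ (b : ℕ) < d), Fin.val_mk] at habv
      exact hdisj b a b.isLt hb ha habv.symm
    · exfalso
      push_neg at ha
      simp only [hπ0, dif_neg (by omega : ¬ (a : ℕ) < d), dif_pos hb, Fin.val_mk] at habv
      exact hdisj a b a.isLt ha hb habv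
    · push_neg at ha hb
      simp only [hπ0, dif_neg (by omega : ¬ (a : ℕ) < d),
        dif_neg (by omega : ¬ (b : ℕ) < d), Fin.val_mk] at habv
      apply Fin.ext
      rcases lt_trichotomy (a : ℕ) (b : ℕ) with hc | hc | hc
      · have := hmonohigh a b ha hc; omega
      · exact hc
      · have := hmonohigh b a hb hc; omega
  set π : Equiv.Perm (Fin N) :=
    Equiv.ofBijective π0 (Finite.injective_iff_bijective.mp hπ0inj) with hπdef
  have hπapply : ∀ i : Fin N, π i = π0 i := fun i => rfl
  have hπlow : ∀ (i : Fin N) (hi : (i : ℕ) < d), π i = ⟨Q i, hQlt i hi⟩ := by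
    intro i hi
    rw [hπapply, hπ0]
    simp only
    rw [dif_pos hi]
  have hπhigh : ∀ (i : Fin N), ¬ ((i : ℕ) < d) →
      π i = ⟨(i : ℕ) - f i, by have := i.isLt; omega⟩ := by
    intro i hi
    rw [hπapply, hπ0]
    simp only
    rw [dif_neg hi]
  -- sign of π
  have hsign := sign_block d π
    (by
      intro i j hij hj
      rw [Fin.lt_iff_val_lt_val, hπlow i (by omega), hπlow j hj]
      simp only [Fin.val_mk]
      exact hQdec i j hij hj)
    (by
      intro i j hi hij
      rw [Fin.lt_iff_val_lt_val] at hij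
      rw [Fin.lt_iff_val_lt_val, hπhigh i (by omega), hπhigh j (by omega)]
      simp only [Fin.val_mk]
      exact hmonohigh i j hi hij)
  -- matrices
  set t : Fin d → Fin N := fun j => ⟨Q j, hQlt j j.isLt⟩ with ht
  have htinj : Function.Injective t := by
    intro a b hab
    have habv := congrArg Fin.val hab
    simp only [ht, Fin.val_mk] at habv
    apply Fin.ext
    rcases lt_trichotomy (a : ℕ) (b : ℕ) with hc | hc | hc
    · have := hQdec a b hc b.isLt; omega
    · exact hc
    · have := hQdec b a hc a.isLt; omega
  have hπt : ∀ i : Fin d, π ⟨(i : ℕ), lt_of_lt_of_le i.isLt hdN⟩ = t i := by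
    intro i
    rw [hπlow ⟨(i : ℕ), lt_of_lt_of_le i.isLt hdN⟩ i.isLt]
  set B : Matrix (Fin N) (Fin N) R :=
    Matrix.of fun m j : Fin N => hInt h (((j : ℕ) : ℤ) - ((m : ℕ) : ℤ)) with hB
  have hBdet : B.det = 1 := by
    rw [Matrix.det_of_upperTriangular (by
      intro i j hij
      simp only [hB, Matrix.of_apply]
      apply hInt_neg
      simp only [id] at hij
      rw [Fin.lt_iff_val_lt_val] at hij
      omega)]
    apply Finset.prod_eq_one
    intro i _
    simp only [hB, Matrix.of_apply]
    rw [hInt_congr h (show ((i : ℕ) : ℤ) - ((i : ℕ) : ℤ) = ((0 : ℕ) : ℤ) by ring),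
      hInt_coe, h0]
  have hBunit : IsUnit B.det := by rw [hBdet]; exact isUnit_one
  set A : Matrix (Fin d) (Fin N) R :=
    Matrix.of fun (i : Fin d) (j : Fin N) => hInt h ((P (i : ℕ) : ℤ) + 1 + (j : ℕ)) with hA
  set C : Matrix (Fin d) (Fin N) R := A * B⁻¹ with hC
  have hCB : C * B = A := by
    rw [hC, Matrix.mul_assoc, Matrix.nonsing_inv_mul B hBunit, Matrix.mul_one]
  have hrow : ∀ i : Fin d, A i = ∑ m, C i m • B m := by
    intro i
    funext j
    have h1 : A i j = (C * B) i j := by rw [hCB]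
    rw [h1, Matrix.mul_apply]
    simp only [Finset.sum_apply, Pi.smul_apply, smul_eq_mul]
  have hGentry : ∀ (i j : Fin d), (B.updateRow (t j) (A i)).det = C i (t j) := by
    intro i j
    rw [hrow i, Matrix.det_updateRow_sum B (t j) (fun m => C i m), hBdet, smul_eq_mul, mul_one]
  have hHook : ∀ (i j : Fin d), (B.updateRow (t j) (A i)).det
      = (-1 : R) ^ (Q (j : ℕ)) * hookSchur h (P (i : ℕ)) (Q (j : ℕ)) := by
    intro i j
    exact hook_minor h h0 (P (i : ℕ)) (Q (j : ℕ)) (hQlt j j.isLt)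
  set K : Matrix (Fin d) (Fin d) R := Matrix.of fun i j => C i (t j) with hK
  set G : Matrix (Fin d) (Fin d) R :=
    Matrix.of fun i j : Fin d => hookSchur h (P (i : ℕ)) (Q (j : ℕ)) with hG
  have hKdet : K.det = (-1 : R) ^ (∑ j : Fin d, Q (j : ℕ)) * G.det := by
    have hKG : K = Matrix.of fun i j : Fin d => ((-1 : R) ^ (Q (j : ℕ))) * G i j := by
      ext i j
      simp only [hK, hG, Matrix.of_apply]
      rw [← hGentry i j, hHook i j]
    rw [hKG, Matrix.det_mul_row]
    congr 1
    rw [Finset.prod_pow_eq_pow_sum]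
  set E : Matrix (Fin N) (Fin N) R := Matrix.of fun m k =>
    if hm : ∃ i : Fin d, t i = m then C hm.choose k else if m = k then 1 else 0 with hE
  set JT : Matrix (Fin N) (Fin N) R :=
    Matrix.of fun i j : Fin N => hInt h ((f i : ℤ) - (i : ℕ) + (j : ℕ)) with hJT
  set B' : Matrix (Fin N) (Fin N) R := JT.submatrix π.symm id with hB'
  have hrange : ∀ m : Fin N, (∃ i : Fin d, t i = m) ↔ ((π.symm m : Fin N) : ℕ) < d := by
    intro m
    constructor
    · rintro ⟨i, rfl⟩
      rw [← hπt i, Equiv.symm_apply_apply]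
      exact i.isLt
    · intro hm
      refine ⟨⟨((π.symm m : Fin N) : ℕ), hm⟩, ?_⟩
      rw [← hπt ⟨((π.symm m : Fin N) : ℕ), hm⟩]
      have : (⟨((π.symm m : Fin N) : ℕ), lt_of_lt_of_le hm hdN⟩ : Fin N) = π.symm m :=
        Fin.ext rfl
      rw [this, Equiv.apply_symm_apply]
  have hEB : E * B = B' := by
    ext m j
    rw [Matrix.mul_apply]
    have hπi₀ : π (π.symm m) = m := Equiv.apply_symm_apply π m
    by_cases hcase : ((π.symm m : Fin N) : ℕ) < d
    · have hex : ∃ i : Fin d, t i = m := (hrange m).mpr hcase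
      have hch : hex.choose = ⟨((π.symm m : Fin N) : ℕ), hcase⟩ := by
        apply htinj
        rw [hex.choose_spec, ← hπt ⟨((π.symm m : Fin N) : ℕ), hcase⟩]
        have : (⟨((π.symm m : Fin N) : ℕ), lt_of_lt_of_le hcase hdN⟩ : Fin N) = π.symm m :=
          Fin.ext rfl
        rw [this, hπi₀]
      have hsum : ∑ k, E m k * B k j = (C * B) ⟨((π.symm m : Fin N) : ℕ), hcase⟩ j := by
        rw [Matrix.mul_apply]
        apply Finset.sum_congr rfl
        intro k _
        congr 1
        simp only [hE, Matrix.of_apply]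
        rw [dif_pos hex, hch]
      rw [hsum, hCB]
      simp only [hB', Matrix.submatrix_apply, id, hJT, hA, Matrix.of_apply]
      apply hInt_congr
      have h1 := hlow _ hcase
      have h2 := hP ((π.symm m : Fin N) : ℕ)
      push_cast
      omega
    · have hnex : ¬ ∃ i : Fin d, t i = m := fun hex => hcase ((hrange m).mp hex)
      have hsum : ∑ k, E m k * B k j = B m j := by
        rw [Finset.sum_congr rfl (fun k _ => by
          rw [show E m k = if m = k then (1 : R) else 0 by
            simp only [hE, Matrix.of_apply]; rw [dif_neg hnex]])]
        rw [Finset.sum_congr rfl (fun k _ => by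
          rw [show (if m = k then (1 : R) else 0) * B k j
            = if m = k then B m j else 0 by
              split
              · rename_i hmk; rw [← hmk, one_mul]
              · rw [zero_mul]])]
        simp
      rw [hsum]
      push_neg at hcase
      have hval : ((π.symm m : Fin N) : ℕ) - f ((π.symm m : Fin N) : ℕ) = (m : ℕ) := by
        have := hπhigh (π.symm m) (by omega)
        rw [hπi₀] at this
        exact (congrArg Fin.val this).symm
      simp only [hB', Matrix.submatrix_apply, id, hJT, hB, Matrix.of_apply]
      apply hInt_congr
      have h1 := hhigh ((π.symm m : Fin N) : ℕ) (by omega)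
      push_cast
      omega
  -- block decomposition of E
  have hNsum : d + (N - d) = N := by omega
  set φ : Fin d ⊕ Fin (N - d) ≃ Fin N :=
    ((finSumFinEquiv.trans (finCongr hNsum)).trans (π : Fin N ≃ Fin N)) with hφ
  have hφl : ∀ i : Fin d, φ (Sum.inl i) = t i := by
    intro i
    rw [hφ]
    simp only [Equiv.trans_apply, finCongr_apply]
    have : (Fin.cast hNsum (finSumFinEquiv (Sum.inl i)) : Fin N)
        = ⟨(i : ℕ), lt_of_lt_of_le i.isLt hdN⟩ := Fin.ext (by simp)
    rw [this, hπt]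
  have hφr : ∀ k : Fin (N - d), φ (Sum.inr k)
      = π ⟨d + (k : ℕ), by have := k.isLt; omega⟩ := by
    intro k
    rw [hφ]
    simp only [Equiv.trans_apply, finCongr_apply]
    have : (Fin.cast hNsum (finSumFinEquiv (Sum.inr k)) : Fin N)
        = ⟨d + (k : ℕ), by have := k.isLt; omega⟩ := Fin.ext (by simp)
    rw [this]
  have hnotrange : ∀ k : Fin (N - d), ¬ ∃ i : Fin d, t i = φ (Sum.inr k) := by
    rintro k ⟨i, hi⟩
    have h1 : π ⟨(i : ℕ), lt_of_lt_of_le i.isLt hdN⟩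
        = π ⟨d + (k : ℕ), by have := k.isLt; omega⟩ := by
      rw [hπt i, hi, hφr k]
    have h2 := congrArg Fin.val (π.injective h1)
    simp only [Fin.val_mk] at h2
    have := i.isLt
    omega
  have hEsub : E.submatrix φ φ = Matrix.fromBlocks K
      (Matrix.of fun (i : Fin d) (k : Fin (N - d)) => E (t i) (φ (Sum.inr k))) 0 1 := by
    ext x y
    cases x with
    | inl i =>
      cases y with
      | inl j =>
        simp only [Matrix.submatrix_apply, hφl, Matrix.fromBlocks_apply₁₁]
        have hex : ∃ i' : Fin d, t i' = t i := ⟨i, rfl⟩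
        simp only [hE, hK, Matrix.of_apply]
        rw [dif_pos hex, htinj hex.choose_spec]
      | inr k =>
        simp only [Matrix.submatrix_apply, hφl, Matrix.fromBlocks_apply₁₂, Matrix.of_apply]
    | inr k =>
      cases y with
      | inl j =>
        simp only [Matrix.submatrix_apply, hφl, Matrix.fromBlocks_apply₂₁, Matrix.zero_apply]
        simp only [hE, Matrix.of_apply]
        rw [dif_neg (hnotrange k), if_neg]
        intro hcon
        have h1 : π ⟨d + (k : ℕ), by have := k.isLt; omega⟩
            = π ⟨(j : ℕ), lt_of_lt_of_le j.isLt hdN⟩ := by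
          rw [hπt j, ← hcon, hφr k]
        have h2 := congrArg Fin.val (π.injective h1)
        simp only [Fin.val_mk] at h2
        have := j.isLt
        omega
      | inr k' =>
        simp only [Matrix.submatrix_apply, Matrix.fromBlocks_apply₂₂]
        simp only [hE, Matrix.of_apply]
        rw [dif_neg (hnotrange k), Matrix.one_apply]
        by_cases hkk : k = k'
        · rw [if_pos hkk, if_pos (by rw [hkk])]
        · rw [if_neg hkk, if_neg]
          intro hcon
          rw [hφr k, hφr k'] at hcon
          have h2 := congrArg Fin.val (π.injective hcon)
          simp only [Fin.val_mk] at h2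
          exact hkk (Fin.ext (by omega))
  have hEdet : E.det = K.det := by
    rw [← Matrix.det_submatrix_equiv_self φ E, hEsub, Matrix.det_fromBlocks_zero₂₁,
      Matrix.det_one, mul_one]
  have hB'det : B'.det = K.det := by
    rw [← hEB, Matrix.det_mul, hBdet, mul_one, hEdet]
  -- the sum of the Q's
  have hsq : (∑ i : Fin N, if (i : ℕ) < d then ((π i : Fin N) : ℕ) else 0)
      = ∑ j : Fin d, Q (j : ℕ) := by
    have hstep : ∀ i : Fin N, (if (i : ℕ) < d then ((π i : Fin N) : ℕ) else 0)
        = if (i : ℕ) < d then Q (i : ℕ) else 0 := by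
      intro i
      by_cases hi : (i : ℕ) < d
      · rw [if_pos hi, if_pos hi, hπlow i hi]
      · rw [if_neg hi, if_neg hi]
    rw [Finset.sum_congr rfl (fun i _ => hstep i)]
    rw [Fin.sum_univ_eq_sum_range (fun k => if k < d then Q k else 0) N]
    rw [Fin.sum_univ_eq_sum_range (fun k => Q k) d]
    rw [show (∑ k ∈ Finset.range N, if k < d then Q k else 0)
        = ∑ k ∈ Finset.range d, if k < d then Q k else 0 from
      (Finset.sum_subset (Finset.range_subset_range.mpr hdN)
        (fun x _ hx => if_neg (by simpa using hx))).symm]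
    apply Finset.sum_congr rfl
    intro x hx
    rw [if_pos (Finset.mem_range.mp hx)]
  -- final assembly
  have hJTsub : JT = B'.submatrix ⇑π id := by
    rw [hB', Matrix.submatrix_submatrix]
    ext i j
    simp [Equiv.symm_apply_apply]
  show JT.det = G.det
  rw [hJTsub, Matrix.det_permute, hB'det, hKdet, hsign, hsq]
  rw [Units.val_pow_eq_pow_val]
  push_cast
  rw [← mul_assoc, ← pow_add]
  rw [Even.neg_one_pow ⟨∑ j : Fin d, Q (j : ℕ), rfl⟩, one_mul]
end

section
/- Let C be an (m+n)×(m+n) real totally nonnegative matrix (so det(1+C) ≥ 1), let D be the lower-right n×n corner of C(1+C)⁻¹, and suppose det(1−D) ≠ 0. Then E = D(1−D)⁻¹ is totally nonnegative. -/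
open Matrix

/-- A real matrix is totally nonnegative if every minor (determinant of a square
submatrix with rows and columns taken in increasing order) is nonnegative. -/
def TotallyNonneg {n : ℕ} (M : Matrix (Fin n) (Fin n) ℝ) : Prop :=
  ∀ (k : ℕ) (f g : Fin k → Fin n), StrictMono f → StrictMono g →
    0 ≤ (M.submatrix f g).det

/-! Write `A = 1 + C`. The corner `D` of `C A⁻¹ = 1 - A⁻¹` is `1 - N`, where `N⁻¹` is the Schur
complement `1 + X` of `1 + C₁₁` in `A`, so `E = N⁻¹ - 1 = X = C₂₂ - C₂₁ (1 + C₁₁)⁻¹ C₁₂`.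
A minor `X[f, g]` times `det (1 + C₁₁) > 0` is the determinant of the bordered minor
`C[I ∪ f, I ∪ g]` (with `I` the first `m` indices) plus the identity on the `I` block. Adding a
nonnegative diagonal to a matrix with nonnegative principal minors keeps its determinant
nonnegative: expanding along a row, the diagonal entry `s a` contributes `s a` times a principal
minor of the same kind. -/

section DiagonalPerturbation

variable {R : Type*} [CommRing R]

theorem Matrix.det_add_diagonal_eq_det_add_diagonal_update_add {p : ℕ}
    (B : Matrix (Fin (p + 1)) (Fin (p + 1)) R) (s : Fin (p + 1) → R) (a : Fin (p + 1)) :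
    (B + diagonal s).det = (B + diagonal (Function.update s a 0)).det +
      s a * (B.submatrix a.succAbove a.succAbove + diagonal (s ∘ a.succAbove)).det := by
  have minor_eq (j : Fin (p + 1)) : (B + diagonal s).submatrix a.succAbove j.succAbove =
      (B + diagonal (Function.update s a 0)).submatrix a.succAbove j.succAbove := by
    ext i k
    simp [diagonal_apply]
  have principal_minor : (B + diagonal s).submatrix a.succAbove a.succAbove =
      B.submatrix a.succAbove a.succAbove + diagonal (s ∘ a.succAbove) := by
    ext i k
    simp [diagonal_apply, (Fin.succAbove_right_injective (p := a)).eq_iff]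
  rw [det_succ_row _ a, det_succ_row (B + diagonal (Function.update s a 0)) a,
    ← sub_eq_iff_eq_add', ← Finset.sum_sub_distrib, Finset.sum_eq_single a]
  · rw [← minor_eq, principal_minor]
    simp only [add_apply, diagonal_apply_eq, Function.update_self]
    ring_nf
    simp
  · intro j _ hj
    simp [minor_eq, Ne.symm hj]
  · simp

variable [PartialOrder R] [IsOrderedRing R]

theorem Matrix.prod_le_det_add_diagonal {p : ℕ} (B : Matrix (Fin p) (Fin p) R)
    (hB : ∀ (k : ℕ) (u : Fin k → Fin p), StrictMono u → 0 ≤ (B.submatrix u u).det)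
    (s : Fin p → R) (hs : 0 ≤ s) : ∏ i, s i ≤ (B + diagonal s).det := by
  induction p with
  | zero => simp
  | succ p ih =>
    suffices ∀ T : Finset (Fin (p + 1)), ∀ s : Fin (p + 1) → R, 0 ≤ s → (∀ i ∉ T, s i = 0) →
        ∏ i, s i ≤ (B + diagonal s).det from this Finset.univ s hs (by simp)
    intro T
    induction T using Finset.induction_on with
    | empty =>
      intro s _ hs0
      obtain rfl : s = 0 := funext fun i => hs0 i (Finset.notMem_empty i)
      simpa using hB _ id strictMono_id
    | insert a T _ ihT =>
      intro s hs hsT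
      have rest : 0 ≤ (B + diagonal (Function.update s a 0)).det := by
        refine le_of_eq_of_le ?_ (ihT _ (fun i => ?_) fun i hi => ?_)
        · exact (Finset.prod_eq_zero (Finset.mem_univ a) (by simp)).symm
        · rcases eq_or_ne i a with rfl | hia
          · simp
          · simpa [hia] using hs i
        · rcases eq_or_ne i a with rfl | hia
          · simp
          · simpa [hia] using hsT i (by simp [hia, hi])
      have minor : ∏ i, s (a.succAbove i) ≤
          (B.submatrix a.succAbove a.succAbove + diagonal (s ∘ a.succAbove)).det :=
        ih _ (fun k u hu => by
          simpa using hB k _ ((Fin.strictMono_succAbove a).comp hu)) _ fun i => hs _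
      rw [det_add_diagonal_eq_det_add_diagonal_update_add B s a, Fin.prod_univ_succAbove _ a]
      exact le_add_of_nonneg_of_le rest (mul_le_mul_of_nonneg_left minor (hs a))

theorem Matrix.one_le_det_one_add {p : ℕ} (B : Matrix (Fin p) (Fin p) R)
    (hB : ∀ (k : ℕ) (u : Fin k → Fin p), StrictMono u → 0 ≤ (B.submatrix u u).det) :
    1 ≤ (1 + B).det := by
  simpa [add_comm] using B.prod_le_det_add_diagonal hB 1 zero_le_one

theorem Matrix.det_add_diagonal_nonneg {p : ℕ} (B : Matrix (Fin p) (Fin p) R)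
    (hB : ∀ (k : ℕ) (u : Fin k → Fin p), StrictMono u → 0 ≤ (B.submatrix u u).det)
    (s : Fin p → R) (hs : 0 ≤ s) : 0 ≤ (B + diagonal s).det :=
  (Finset.prod_nonneg fun i _ => hs i).trans (B.prod_le_det_add_diagonal hB s hs)

end DiagonalPerturbation

section BlockInverse

variable {R : Type*} [CommRing R] {l n : Type*} [Fintype l] [Fintype n] [DecidableEq l]
  [DecidableEq n]

theorem Matrix.isUnit_det_schur_of_fromBlocks {A : Matrix l l R} {B : Matrix l n R}
    {C : Matrix n l R} {D : Matrix n n R} (hA : IsUnit A.det)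
    (hM : IsUnit (fromBlocks A B C D).det) : IsUnit (D - C * A⁻¹ * B).det := by
  let := invertibleOfIsUnitDet A hA
  rw [det_fromBlocks₁₁, invOf_eq_nonsing_inv] at hM
  exact isUnit_of_mul_isUnit_right hM

theorem Matrix.toBlocks₂₂_inv_fromBlocks {A : Matrix l l R} {B : Matrix l n R}
    {C : Matrix n l R} {D : Matrix n n R} (hA : IsUnit A.det)
    (hM : IsUnit (fromBlocks A B C D).det) :
    (fromBlocks A B C D)⁻¹.toBlocks₂₂ = (D - C * A⁻¹ * B)⁻¹ := by
  let := invertibleOfIsUnitDet A hA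
  let := invertibleOfIsUnitDet _ hM
  let := invertibleOfFromBlocks₁₁Invertible A B C D
  rw [← invOf_eq_nonsing_inv (fromBlocks A B C D), invOf_fromBlocks₁₁_eq, toBlocks_fromBlocks₂₂,
    invOf_eq_nonsing_inv, invOf_eq_nonsing_inv]

theorem Matrix.toBlocks₂₂_mul_inv_one_sub (C : Matrix (l ⊕ n) (l ⊕ n) R)
    (hC : IsUnit (1 + C).det) (hC₁₁ : IsUnit (1 + C.toBlocks₁₁).det) :
    (C * (1 + C)⁻¹).toBlocks₂₂ * (1 - (C * (1 + C)⁻¹).toBlocks₂₂)⁻¹ =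
      C.toBlocks₂₂ - C.toBlocks₂₁ * (1 + C.toBlocks₁₁)⁻¹ * C.toBlocks₁₂ := by
  have one_add_eq : 1 + C = fromBlocks (1 + C.toBlocks₁₁) C.toBlocks₁₂ C.toBlocks₂₁
      (1 + C.toBlocks₂₂) := by
    conv_lhs => rw [← fromBlocks_toBlocks C, ← fromBlocks_one, fromBlocks_add, zero_add, zero_add]
  have mul_inv_eq : C * (1 + C)⁻¹ = 1 - (1 + C)⁻¹ := by
    rw [eq_sub_iff_add_eq, ← add_one_mul, add_comm C, mul_nonsing_inv _ hC]
  set S := 1 + C.toBlocks₂₂ - C.toBlocks₂₁ * (1 + C.toBlocks₁₁)⁻¹ * C.toBlocks₁₂ with hS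
  rw [one_add_eq] at hC
  have hSunit : IsUnit S.det := isUnit_det_schur_of_fromBlocks hC₁₁ hC
  have corner : (C * (1 + C)⁻¹).toBlocks₂₂ = 1 - S⁻¹ := by
    rw [mul_inv_eq, one_add_eq, ← toBlocks₂₂_inv_fromBlocks hC₁₁ hC]
    ext i j
    simp [toBlocks₂₂, one_apply]
  rw [corner, sub_sub_cancel, nonsing_inv_nonsing_inv _ hSunit, sub_mul, one_mul,
    nonsing_inv_mul _ hSunit, hS]
  abel

end BlockInverse

theorem Fin.strictMono_append_castAdd_natAdd_comp {m n k : ℕ} {f : Fin k → Fin n}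
    (hf : StrictMono f) :
    StrictMono (Fin.append (Fin.castAdd n : Fin m → Fin (m + n)) (Fin.natAdd m ∘ f)) := by
  intro i j hij
  induction i using Fin.addCases <;> induction j using Fin.addCases <;>
    simp only [Fin.append_left, Fin.append_right, Function.comp_apply, Fin.lt_def,
      Fin.val_castAdd, Fin.val_natAdd] at hij ⊢
  · exact hij
  · omega
  · omega
  · exact Nat.add_lt_add_left (hf (Nat.lt_of_add_lt_add_left hij)) m

namespace TotallyNonneg

variable {m n k : ℕ}

theorem submatrix {C : Matrix (Fin n) (Fin n) ℝ} (hC : TotallyNonneg C) {f g : Fin k → Fin n}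
    (hf : StrictMono f) (hg : StrictMono g) : TotallyNonneg (C.submatrix f g) :=
  fun _ u v hu hv => by simpa using hC _ _ _ (hf.comp hu) (hg.comp hv)

theorem one_le_det_one_add {C : Matrix (Fin n) (Fin n) ℝ} (hC : TotallyNonneg C) :
    1 ≤ (1 + C).det :=
  C.one_le_det_one_add fun _ u hu => hC _ u u hu hu

theorem isUnit_det_one_add {C : Matrix (Fin n) (Fin n) ℝ} (hC : TotallyNonneg C) :
    IsUnit (1 + C).det :=
  isUnit_iff_ne_zero.mpr (one_pos.trans_le hC.one_le_det_one_add).ne'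

theorem schur_one_add {C : Matrix (Fin (m + n)) (Fin (m + n)) ℝ} (hC : TotallyNonneg C) :
    TotallyNonneg (C.submatrix (Fin.natAdd m) (Fin.natAdd m) -
      C.submatrix (Fin.natAdd m) (Fin.castAdd n) *
        (1 + C.submatrix (Fin.castAdd n) (Fin.castAdd n))⁻¹ *
          C.submatrix (Fin.castAdd n) (Fin.natAdd m)) := by
  intro k f g hf hg
  set P := 1 + C.submatrix (Fin.castAdd n) (Fin.castAdd n) with hP
  have hPpos : 0 < P.det := one_pos.trans_le
    (hC.submatrix (Fin.strictMono_castAdd n) (Fin.strictMono_castAdd n)).one_le_det_one_add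
  let := invertibleOfIsUnitDet P (isUnit_iff_ne_zero.mpr hPpos.ne')
  set φ := Fin.append (Fin.castAdd n : Fin m → Fin (m + n)) (Fin.natAdd m ∘ f)
  set ψ := Fin.append (Fin.castAdd n : Fin m → Fin (m + n)) (Fin.natAdd m ∘ g)
  set J : Fin (m + k) → ℝ := Fin.append 1 0
  have bordered : (C.submatrix φ ψ + diagonal J).submatrix finSumFinEquiv finSumFinEquiv =
      fromBlocks P (C.submatrix (Fin.castAdd n) (Fin.natAdd m ∘ g))
        (C.submatrix (Fin.natAdd m ∘ f) (Fin.castAdd n))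
        (C.submatrix (Fin.natAdd m ∘ f) (Fin.natAdd m ∘ g)) := by
    ext (i | i) (j | j) <;> simp [φ, ψ, J, hP, diagonal_apply, one_apply, add_comm, Fin.ext_iff]
    omega
  have hdet : P.det * ((C.submatrix (Fin.natAdd m) (Fin.natAdd m) -
      C.submatrix (Fin.natAdd m) (Fin.castAdd n) * P⁻¹ *
        C.submatrix (Fin.castAdd n) (Fin.natAdd m)).submatrix f g).det =
      (C.submatrix φ ψ + diagonal J).det := by
    rw [← det_submatrix_equiv_self finSumFinEquiv, bordered, det_fromBlocks₁₁, invOf_eq_nonsing_inv]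
    rfl
  refine nonneg_of_mul_nonneg_right (hdet ▸ ?_) hPpos
  refine (C.submatrix φ ψ).det_add_diagonal_nonneg (fun _ u hu => ?_) J ?_
  · exact hC.submatrix (Fin.strictMono_append_castAdd_natAdd_comp hf)
      (Fin.strictMono_append_castAdd_natAdd_comp hg) _ u u hu hu
  · intro i
    induction i using Fin.addCases <;> simp [J]

end TotallyNonneg

theorem widom_stmt18_general {m n : ℕ} (C : Matrix (Fin (m + n)) (Fin (m + n)) ℝ)
    (hC : TotallyNonneg C)
    (D : Matrix (Fin n) (Fin n) ℝ)
    (hD : D = (C * (1 + C)⁻¹).submatrix (Fin.natAdd m) (Fin.natAdd m))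
    (E : Matrix (Fin n) (Fin n) ℝ)
    (hE : E = D * (1 - D)⁻¹) :
    TotallyNonneg E := by
  let e : Fin m ⊕ Fin n ≃ Fin (m + n) := finSumFinEquiv
  have hC₁₁ : IsUnit (1 + (C.submatrix e e).toBlocks₁₁).det :=
    (hC.submatrix (Fin.strictMono_castAdd n) (Fin.strictMono_castAdd n)).isUnit_det_one_add
  have one_add_reindex : 1 + C.submatrix e e = (1 + C).submatrix e e := by
    rw [← submatrix_one_equiv e]
    rfl
  have hCe : IsUnit (1 + C.submatrix e e).det := by
    rw [one_add_reindex, det_submatrix_equiv_self]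
    exact hC.isUnit_det_one_add
  have corner : D = (C.submatrix e e * (1 + C.submatrix e e)⁻¹).toBlocks₂₂ := by
    rw [hD, one_add_reindex, inv_submatrix_equiv, submatrix_mul_equiv]
    rfl
  rw [hE, corner, toBlocks₂₂_mul_inv_one_sub _ hCe hC₁₁]
  exact hC.schur_one_add

theorem widom_stmt18 {m n : ℕ} (C : Matrix (Fin (m + n)) (Fin (m + n)) ℝ)
    (hC : TotallyNonneg C) (h : IsUnit (1 + C))
    (D : Matrix (Fin n) (Fin n) ℝ)
    (hD : D = (C * (1 + C)⁻¹).submatrix (Fin.natAdd m) (Fin.natAdd m))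
    (hDdet : (1 - D).det ≠ 0)
    (E : Matrix (Fin n) (Fin n) ℝ)
    (hE : E = D * (1 - D)⁻¹) :
    TotallyNonneg E :=
  widom_stmt18_general C hC D hD E hE
end
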